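/- Let F : ℝ → [0,1] be a distribution function and define X : (0,1) → ℝ (viewed as a random variable on the Borel probability space ([0,1], B([0,1]), λ)) by X(ω) = sup{ t ∈ ℝ : F(t) < ω }. Then X is measurable and its distribution function is F, i.e. λ({ω ∈ (0,1) : X(ω) ≤ x}) = F(x) for every x ∈ ℝ. -/
import Mathlib


open MeasureTheory Set Filter

/-- If `F` is a distribution function (nondecreasing, right-continuous, with limits `0` at
`-∞` and `1` at `+∞`) then the generalized inverse `X ω = sup {t | F t < ω}`, viewed as a
random variable on `(0,1)` with Lebesgue measure, is measurable and has distribution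
function `F`: `λ {ω ∈ (0,1) | X ω ≤ x} = F x` for every `x`. -/
theorem stmt_9 (F : ℝ → ℝ) (hmono : Monotone F)
    (hrc : ∀ x : ℝ, ContinuousWithinAt F (Set.Ici x) x)
    (hbot : Tendsto F atBot (nhds 0)) (htop : Tendsto F atTop (nhds 1)) :
    Measurable (fun ω : Set.Ioo (0:ℝ) 1 => sSup {t : ℝ | F t < (ω : ℝ)}) ∧
    ∀ x : ℝ,
      (volume : Measure ℝ).comap (Subtype.val : Set.Ioo (0:ℝ) 1 → ℝ)
          {ω : Set.Ioo (0:ℝ) 1 | sSup {t : ℝ | F t < (ω : ℝ)} ≤ x}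
        = ENNReal.ofReal (F x) := by
  have hle1 : ∀ x : ℝ, F x ≤ 1 := fun x =>
    ge_of_tendsto htop (eventually_atTop.2 ⟨x, fun t ht => hmono ht⟩)
  have h0le : ∀ x : ℝ, 0 ≤ F x := fun x =>
    le_of_tendsto hbot (eventually_atBot.2 ⟨x, fun t ht => hmono ht⟩)
  have key : ∀ (x ω : ℝ), 0 < ω → ω < 1 →
      (sSup {t : ℝ | F t < ω} ≤ x ↔ ω ≤ F x) := by
    intro x ω h0 h1
    obtain ⟨t0, ht0⟩ : ∃ t0, ω < F t0 := (htop.eventually_const_lt h1).exists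
    have hbdd : BddAbove {t : ℝ | F t < ω} := ⟨t0, fun s hs => by
      by_contra h
      push_neg at h
      exact absurd (hmono h.le) (not_le.2 (lt_trans hs ht0))⟩
    obtain ⟨s0, hs0⟩ : ∃ s0, F s0 < ω := (hbot.eventually_lt_const h0).exists
    constructor
    · intro h
      by_contra hc
      push_neg at hc
      have hev : ∀ᶠ t in nhdsWithin x (Set.Ici x), F t < ω :=
        Filter.Tendsto.eventually_lt_const hc (hrc x)
      have hev' : ∀ᶠ t in nhdsWithin x (Set.Ioi x), F t < ω :=
        hev.filter_mono (nhdsWithin_mono x Set.Ioi_subset_Ici_self)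
      obtain ⟨x', hFx', hx'⟩ := (hev'.and eventually_mem_nhdsWithin).exists
      have : x' ≤ sSup {t : ℝ | F t < ω} := le_csSup hbdd hFx'
      exact absurd (this.trans h) (not_le.2 hx')
    · intro h
      refine csSup_le ⟨s0, hs0⟩ (fun t ht => ?_)
      by_contra hc
      push_neg at hc
      exact absurd (hmono hc.le) (not_le.2 (lt_of_lt_of_le ht h))
  constructor
  · apply measurable_of_Iic
    intro x
    have : (fun ω : Set.Ioo (0:ℝ) 1 => sSup {t : ℝ | F t < (ω : ℝ)}) ⁻¹' Set.Iic x
        = (Subtype.val : Set.Ioo (0:ℝ) 1 → ℝ) ⁻¹' Set.Iic (F x) := by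
      ext ω
      simpa using key x ω ω.2.1 ω.2.2
    rw [this]
    exact measurable_subtype_coe measurableSet_Iic
  · intro x
    have hemb : MeasurableEmbedding (Subtype.val : Set.Ioo (0:ℝ) 1 → ℝ) :=
      MeasurableEmbedding.subtype_coe measurableSet_Ioo
    rw [hemb.comap_apply]
    have himg : (Subtype.val : Set.Ioo (0:ℝ) 1 → ℝ) ''
        {ω : Set.Ioo (0:ℝ) 1 | sSup {t : ℝ | F t < (ω : ℝ)} ≤ x}
        = Set.Ioo 0 1 ∩ Set.Iic (F x) := by
      ext ω
      constructor
      · rintro ⟨⟨ω, hω⟩, hs, rfl⟩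
        exact ⟨hω, (key x ω hω.1 hω.2).1 hs⟩
      · rintro ⟨hω, hle⟩
        exact ⟨⟨ω, hω⟩, (key x ω hω.1 hω.2).2 hle, rfl⟩
    rw [himg]
    apply le_antisymm
    · calc volume (Set.Ioo 0 1 ∩ Set.Iic (F x)) ≤ volume (Set.Ioc 0 (F x)) :=
            measure_mono (fun ω hω => ⟨hω.1.1, hω.2⟩)
        _ = ENNReal.ofReal (F x) := by simp [Real.volume_Ioc]
    · calc ENNReal.ofReal (F x) = volume (Set.Ioo 0 (F x)) := by simp [Real.volume_Ioo]
        _ ≤ volume (Set.Ioo 0 1 ∩ Set.Iic (F x)) :=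
            measure_mono (fun ω hω => ⟨⟨hω.1, lt_of_lt_of_le hω.2 (hle1 x)⟩, hω.2.le⟩)
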